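/- Let X ~ N_p(0, Σ) with λ₁ > λ₂ > 0 and unit leading eigenvector u₁, and let f = u₁ᵀX. Partition {1,...,p} into nonempty blocks A and B, and let ū_{1,A} = (1/|A|) Σ_{j∈A} (u₁)_j and ū_{1,B} defined similarly. Let I₁,...,I_K (K ≥ 2) be an interval partition of ℝ with each interval of positive probability under f. Define m_{k,A} = (1/|A|) Σ_{j∈A} E[X_j | f ∈ I_k], similarly m_{k,B}, and D_pop = max over pairs k < ℓ of max(|m_{k,A} − m_{ℓ,A}|, |m_{k,B} − m_{ℓ,B}|). If max(|ū_{1,A}|, |ū_{1,B}|) > 0, then D_pop ≥ max(|ū_{1,A}|, |ū_{1,B}|) · |E[f | f ∈ I_max] − E[f | f ∈ I_min]| > 0, where I_min and I_max are the leftmost and rightmost intervals. -/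

import Mathlib

/-!
Write `f = ∑ᵢ (u₁)ᵢ Xᵢ`. Because `Σ u₁ = λ₁ u₁`, for every `j` the residual `X_j - (u₁)_j f` is
uncorrelated with `f`; the pair being jointly Gaussian, the residual is independent of `f` and
centred, so `E[X_j | f ∈ I] = (u₁)_j E[f | f ∈ I]` for every interval `I`. Hence the block means
are `m_{k,A} = ū_{1,A} E[f | f ∈ I_k]` (and likewise for `B`), and the pair (leftmost, rightmost)
of intervals attains the bound. It is positive because `f ~ N(0, λ₁)` has no atoms, which makes
`E[f | f ∈ I_min] < sup I_min ≤ inf I_max < E[f | f ∈ I_max]`.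
-/

open MeasureTheory ProbabilityTheory

/-- Conditional mean of `g` given the event `C`: `E[g | C] = (∫_C g dμ) / μ(C)`. -/
noncomputable def condMeanEvent {Ω : Type*} [MeasurableSpace Ω] (μ : Measure Ω)
    (g : Ω → ℝ) (C : Set Ω) : ℝ :=
  (∫ ω in C, g ω ∂μ) / (μ C).toReal

section CondMean

variable {Ω : Type*} [MeasurableSpace Ω] {μ : Measure Ω}

lemma ProbabilityTheory.IndepFun.setIntegral_preimage_eq_mul_integral {β : Type*}
    [MeasurableSpace β] {f : Ω → β} {Y : Ω → ℝ} (hfY : IndepFun f Y μ) (hf : AEMeasurable f μ)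
    (hY : AEStronglyMeasurable Y μ) {s : Set β} (hs : MeasurableSet s) :
    ∫ ω in f ⁻¹' s, Y ω ∂μ = μ.real (f ⁻¹' s) * ∫ ω, Y ω ∂μ := by
  have hfs : NullMeasurableSet (f ⁻¹' s) μ := hf.nullMeasurable hs
  have hφ : Measurable (s.indicator (1 : β → ℝ)) := measurable_one.indicator hs
  have hpre : (fun ω => s.indicator (1 : β → ℝ) (f ω)) = (f ⁻¹' s).indicator 1 := by
    ext ω
    by_cases hω : f ω ∈ s <;> simp [hω]
  calc ∫ ω in f ⁻¹' s, Y ω ∂μ = ∫ ω, s.indicator 1 (f ω) * Y ω ∂μ := by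
        rw [← integral_indicator₀ hfs]
        congr with ω
        by_cases hω : f ω ∈ s <;> simp [hω]
    _ = (∫ ω, s.indicator 1 (f ω) ∂μ) * ∫ ω, Y ω ∂μ :=
        (hfY.comp hφ measurable_id).integral_fun_mul_eq_mul_integral
          (hφ.comp_aemeasurable hf).aestronglyMeasurable hY
    _ = μ.real (f ⁻¹' s) * ∫ ω, Y ω ∂μ := by
        rw [hpre, integral_indicator₀ hfs]
        simp

lemma condMeanEvent_neg (g : Ω → ℝ) (C : Set Ω) :
    condMeanEvent μ (-g) C = -condMeanEvent μ g C := by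
  simp only [condMeanEvent, Pi.neg_apply, integral_neg, neg_div]

lemma condMeanEvent_lt_of_ae_lt [IsFiniteMeasure μ] {g : Ω → ℝ} {C : Set Ω} {c : ℝ}
    (hC : μ C ≠ 0) (hg : IntegrableOn g C μ) (hlt : ∀ᵐ ω ∂μ.restrict C, g ω < c) :
    condMeanEvent μ g C < c := by
  have hpos : 0 < ∫ ω in C, (c - g ω) ∂μ := by
    rw [integral_pos_iff_support_of_nonneg_ae (hlt.mono fun _ h => (sub_pos.2 h).le)
      ((integrable_const c).sub hg)]
    calc (0 : ENNReal) < μ.restrict C Set.univ := by simpa using pos_iff_ne_zero.2 hC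
      _ ≤ _ := measure_mono_ae (hlt.mono fun _ h _ => (sub_pos.2 h).ne')
  rw [integral_sub (integrable_const c) hg, setIntegral_const, smul_eq_mul, sub_pos] at hpos
  rw [condMeanEvent, div_lt_iff₀ (ENNReal.toReal_pos hC (measure_ne_top μ C))]
  rwa [measureReal_def, mul_comm] at hpos

lemma lt_condMeanEvent_of_ae_lt [IsFiniteMeasure μ] {g : Ω → ℝ} {C : Set Ω} {c : ℝ}
    (hC : μ C ≠ 0) (hg : IntegrableOn g C μ) (hlt : ∀ᵐ ω ∂μ.restrict C, c < g ω) :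
    c < condMeanEvent μ g C := by
  have := condMeanEvent_lt_of_ae_lt hC hg.neg (c := -c) (hlt.mono fun _ h => neg_lt_neg h)
  rw [condMeanEvent_neg] at this
  linarith

lemma condMeanEvent_preimage_lt_of_forall_lt [IsFiniteMeasure μ] {f : Ω → ℝ}
    (hf : AEMeasurable f μ) (hfint : Integrable f μ) (hatom : ∀ c, μ (f ⁻¹' {c}) = 0)
    {s₀ s₁ : Set ℝ} (hs₀ : MeasurableSet s₀) (hs₁ : MeasurableSet s₁)
    (hlt : ∀ x ∈ s₀, ∀ y ∈ s₁, x < y) (h₀ : μ (f ⁻¹' s₀) ≠ 0) (h₁ : μ (f ⁻¹' s₁) ≠ 0) :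
    condMeanEvent μ f (f ⁻¹' s₀) < condMeanEvent μ f (f ⁻¹' s₁) := by
  obtain ⟨x₀, hx₀⟩ : s₀.Nonempty := Set.nonempty_iff_ne_empty.2 fun h => h₀ (by simp [h])
  obtain ⟨y₀, hy₀⟩ : s₁.Nonempty := Set.nonempty_iff_ne_empty.2 fun h => h₁ (by simp [h])
  set c := sSup s₀
  have hle : ∀ x ∈ s₀, x ≤ c := fun x hx => le_csSup ⟨y₀, fun x hx => (hlt x hx y₀ hy₀).le⟩ hx
  have hge : ∀ y ∈ s₁, c ≤ y := fun y hy => csSup_le ⟨x₀, hx₀⟩ fun x hx => (hlt x hx y hy).le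
  have hne : ∀ᵐ ω ∂μ, f ω ≠ c := measure_eq_zero_iff_ae_notMem.1 (hatom c)
  calc condMeanEvent μ f (f ⁻¹' s₀) < c := by
        refine condMeanEvent_lt_of_ae_lt h₀ hfint.integrableOn ?_
        filter_upwards [ae_restrict_mem₀ (hf.nullMeasurable hs₀), ae_restrict_of_ae hne]
          with ω hω hωc
        exact (hle _ hω).lt_of_ne hωc
    _ < condMeanEvent μ f (f ⁻¹' s₁) := by
        refine lt_condMeanEvent_of_ae_lt h₁ hfint.integrableOn ?_
        filter_upwards [ae_restrict_mem₀ (hf.nullMeasurable hs₁), ae_restrict_of_ae hne]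
          with ω hω hωc
        exact (hge _ hω).lt_of_ne' hωc

end CondMean

open Matrix

lemma Matrix.sum_mul_mul_eq_dotProduct_mulVec {ι : Type*} [Fintype ι] (S : Matrix ι ι ℝ)
    (l : ι → ℝ) : ∑ i, ∑ j, l i * S i j * l j = l ⬝ᵥ (S *ᵥ l) := by
  simp [dotProduct, mulVec, Finset.mul_sum, mul_assoc]

lemma Matrix.IsSymm.dotProduct_mulVec_add_eq_sub {ι : Type*} [Fintype ι] {S : Matrix ι ι ℝ}
    (hS : S.IsSymm) {l m : ι → ℝ} (h : m ⬝ᵥ (S *ᵥ l) = 0) :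
    (l + m) ⬝ᵥ (S *ᵥ (l + m)) = (l - m) ⬝ᵥ (S *ᵥ (l - m)) := by
  have hlm : l ⬝ᵥ (S *ᵥ m) = 0 := by
    rw [dotProduct_mulVec, ← mulVec_transpose, hS.eq, dotProduct_comm, h]
  simp only [mulVec_add, mulVec_sub, add_dotProduct, sub_dotProduct, dotProduct_add,
    dotProduct_sub, h, hlm]
  ring

lemma hasGaussianLaw_of_map_eq_gaussianReal {Ω : Type*} [MeasurableSpace Ω] {μ : Measure Ω}
    {g : Ω → ℝ} {m : ℝ} {v : NNReal} (h : μ.map g = gaussianReal m v) : HasGaussianLaw g μ :=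
  ⟨by rw [h]; infer_instance⟩

lemma measure_preimage_singleton_eq_zero_of_map_eq_gaussianReal {Ω : Type*} [MeasurableSpace Ω]
    {μ : Measure Ω} {g : Ω → ℝ} {m : ℝ} {v : NNReal}
    (h : μ.map g = gaussianReal m v) (hv : v ≠ 0) (c : ℝ) : μ (g ⁻¹' {c}) = 0 := by
  have := nullSingletonClass_gaussianReal (μ := m) hv
  rw [← Measure.map_apply_of_aemeasurable (hasGaussianLaw_of_map_eq_gaussianReal h).aemeasurable
    (measurableSet_singleton c), h, measure_singleton]

section GaussianVector

variable {Ω ι : Type*} [MeasurableSpace Ω] {μ : Measure Ω} [Fintype ι]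
  {X : ι → Ω → ℝ} {S : Matrix ι ι ℝ}
  (hGauss : ∀ l : ι → ℝ, μ.map (fun ω => ∑ i, l i * X i ω) =
    gaussianReal 0 (∑ i, ∑ j, l i * S i j * l j).toNNReal)
include hGauss

lemma hasGaussianLaw_sum_mul (l : ι → ℝ) : HasGaussianLaw (fun ω => ∑ i, l i * X i ω) μ :=
  hasGaussianLaw_of_map_eq_gaussianReal (hGauss l)

lemma integral_sum_mul_eq_zero (l : ι → ℝ) : ∫ ω, ∑ i, l i * X i ω ∂μ = 0 := by
  calc ∫ ω, ∑ i, l i * X i ω ∂μ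
      = ∫ x, x ∂μ.map (fun ω => ∑ i, l i * X i ω) :=
        (integral_map (hasGaussianLaw_sum_mul hGauss l).aemeasurable aestronglyMeasurable_id).symm
    _ = 0 := by rw [hGauss l, integral_id_gaussianReal]

lemma variance_sum_mul (l : ι → ℝ) :
    Var[fun ω => ∑ i, l i * X i ω; μ] = (∑ i, ∑ j, l i * S i j * l j).toNNReal := by
  rw [← variance_id_map (hasGaussianLaw_sum_mul hGauss l).aemeasurable, hGauss l,
    variance_id_gaussianReal]

lemma hasGaussianLaw_prodMk_sum_mul (l m : ι → ℝ) :
    HasGaussianLaw (fun ω => (∑ i, l i * X i ω, ∑ i, m i * X i ω)) μ := by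
  refine ⟨isGaussian_of_map_eq_gaussianReal fun L => ?_⟩
  set c : ι → ℝ := fun i => L (1, 0) * l i + L (0, 1) * m i
  refine ⟨0, (∑ i, ∑ j, c i * S i j * c j).toNNReal, ?_⟩
  have hL : ∀ a b : ℝ, L (a, b) = L (1, 0) * a + L (0, 1) * b := fun a b => by
    rw [show (a, b) = a • ((1 : ℝ), (0 : ℝ)) + b • ((0 : ℝ), (1 : ℝ)) by simp, map_add,
      map_smul, map_smul, smul_eq_mul, smul_eq_mul, mul_comm a, mul_comm b]
  rw [AEMeasurable.map_map_of_aemeasurable L.continuous.aemeasurable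
    ((hasGaussianLaw_sum_mul hGauss l).aemeasurable.prodMk
      (hasGaussianLaw_sum_mul hGauss m).aemeasurable)]
  convert hGauss c using 2
  ext ω
  rw [Function.comp_apply, hL]
  simp only [c, Finset.mul_sum, add_mul, Finset.sum_add_distrib, mul_assoc]

lemma covariance_sum_mul_eq_zero (hS : S.IsSymm) {l m : ι → ℝ} (h : m ⬝ᵥ (S *ᵥ l) = 0) :
    cov[fun ω => ∑ i, l i * X i ω, fun ω => ∑ i, m i * X i ω; μ] = 0 := by
  have := (hasGaussianLaw_sum_mul hGauss l).isProbabilityMeasure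
  have hl := (hasGaussianLaw_sum_mul hGauss l).memLp_two
  have hm := (hasGaussianLaw_sum_mul hGauss m).memLp_two
  have hadd : Var[fun ω => ∑ i, (l + m) i * X i ω; μ] = Var[fun ω => ∑ i, l i * X i ω; μ]
      + 2 * cov[fun ω => ∑ i, l i * X i ω, fun ω => ∑ i, m i * X i ω; μ]
      + Var[fun ω => ∑ i, m i * X i ω; μ] := by
    simp only [Pi.add_apply, add_mul, Finset.sum_add_distrib]
    exact variance_fun_add hl hm
  have hsub : Var[fun ω => ∑ i, (l - m) i * X i ω; μ] = Var[fun ω => ∑ i, l i * X i ω; μ]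
      - 2 * cov[fun ω => ∑ i, l i * X i ω, fun ω => ∑ i, m i * X i ω; μ]
      + Var[fun ω => ∑ i, m i * X i ω; μ] := by
    simp only [Pi.sub_apply, sub_mul, Finset.sum_sub_distrib]
    exact variance_fun_sub hl hm
  have hsymm : Var[fun ω => ∑ i, (l + m) i * X i ω; μ]
      = Var[fun ω => ∑ i, (l - m) i * X i ω; μ] := by
    rw [variance_sum_mul hGauss, variance_sum_mul hGauss, Matrix.sum_mul_mul_eq_dotProduct_mulVec,
      Matrix.sum_mul_mul_eq_dotProduct_mulVec, hS.dotProduct_mulVec_add_eq_sub h]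
  linarith

lemma indepFun_sum_mul (hS : S.IsSymm) {l m : ι → ℝ} (h : m ⬝ᵥ (S *ᵥ l) = 0) :
    IndepFun (fun ω => ∑ i, l i * X i ω) (fun ω => ∑ i, m i * X i ω) μ :=
  (hasGaussianLaw_prodMk_sum_mul hGauss l m).indepFun_of_covariance_eq_zero
    (covariance_sum_mul_eq_zero hGauss hS h)

lemma condMeanEvent_sum_mul_preimage_eq_dotProduct_mul (hS : S.IsSymm) {u : ι → ℝ} {c : ℝ}
    (heig : S *ᵥ u = c • u) (hu : u ⬝ᵥ u = 1) (m : ι → ℝ) {s : Set ℝ} (hs : MeasurableSet s) :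
    condMeanEvent μ (fun ω => ∑ i, m i * X i ω) ((fun ω => ∑ i, u i * X i ω) ⁻¹' s)
      = (m ⬝ᵥ u) * condMeanEvent μ (fun ω => ∑ i, u i * X i ω)
          ((fun ω => ∑ i, u i * X i ω) ⁻¹' s) := by
  have := (hasGaussianLaw_sum_mul hGauss u).isProbabilityMeasure
  set f := fun ω => ∑ i, u i * X i ω
  set w := m - (m ⬝ᵥ u) • u
  have hw : w ⬝ᵥ (S *ᵥ u) = 0 := by
    simp [w, heig, sub_dotProduct, hu]
  have hsplit : (fun ω => ∑ i, m i * X i ω) = fun ω => (m ⬝ᵥ u) * f ω + ∑ i, w i * X i ω := by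
    ext ω
    simp [f, w, sub_mul, Finset.sum_sub_distrib, Finset.mul_sum, mul_assoc]
  have hresid : ∫ ω in f ⁻¹' s, ∑ i, w i * X i ω ∂μ = 0 := by
    rw [(indepFun_sum_mul hGauss hS hw).setIntegral_preimage_eq_mul_integral
      (hasGaussianLaw_sum_mul hGauss u).aemeasurable
      (hasGaussianLaw_sum_mul hGauss w).aemeasurable.aestronglyMeasurable hs,
      integral_sum_mul_eq_zero hGauss, mul_zero]
  rw [condMeanEvent, condMeanEvent, hsplit,
    integral_add ((hasGaussianLaw_sum_mul hGauss u).integrable.const_mul _).integrableOn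
      (hasGaussianLaw_sum_mul hGauss w).integrable.integrableOn,
    hresid, add_zero, integral_const_mul, mul_div_assoc]

end GaussianVector

/-- Covariance-driven dissociation.  Let `X ~ N_p(0, S)` with simple top
eigenvalue `lam₁ > lam₂ > 0` and unit leading eigenvector `u₁`; let `f = u₁ᵀX`.  Partition
`{1,…,p}` into nonempty blocks `A`, `B`, with average loadings `ū_{1,A}`, `ū_{1,B}`.  Let
`I 0, …, I (K−1)` (`K ≥ 2`) be an interval partition of `ℝ`, ordered left to right, each of
positive probability under `f`.  With block conditional means
`m_{k,A} = (1/|A|) ∑_{j∈A} E[X_j | f ∈ I k]` (similarly `m_{k,B}`) and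
`D_pop = max_{k<ℓ} max(|m_{k,A} − m_{ℓ,A}|, |m_{k,B} − m_{ℓ,B}|)`, if
`max(|ū_{1,A}|, |ū_{1,B}|) > 0` then
`D_pop ≥ max(|ū_{1,A}|, |ū_{1,B}|) · |E[f | f ∈ I_max] − E[f | f ∈ I_min]| > 0`.
(`D_pop ≥ c` is expressed as: some pair `k < ℓ` attains at least `c`.) -/
theorem covariance_driven_dissociation
    {Ω : Type*} [m0 : MeasurableSpace Ω] (μ : Measure Ω) [IsProbabilityMeasure μ]
    {p : ℕ} (S : Matrix (Fin p) (Fin p) ℝ) (hS : S.PosDef)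
    (X : Fin p → Ω → ℝ)
    (hGauss : ∀ l : Fin p → ℝ,
      Measure.map (fun ω => ∑ i, l i * X i ω) μ =
        gaussianReal 0 (Real.toNNReal (∑ i, ∑ j, l i * S i j * l j)))
    (u₁ : Fin p → ℝ) (hunit : ∑ i, (u₁ i) ^ 2 = 1)
    (lam₁ lam₂ : ℝ) (hgap : lam₂ < lam₁) (hlam₂ : 0 < lam₂)
    (heig : S.mulVec u₁ = lam₁ • u₁)
    (f : Ω → ℝ) (hf : f = fun ω => ∑ i, u₁ i * X i ω)
    -- blocks
    (A B : Finset (Fin p))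
    -- interval partition of ℝ, ordered left to right
    (K : ℕ) (hK : 2 ≤ K) (I : Fin K → Set ℝ)
    (hImeas : ∀ k, MeasurableSet (I k))
    (hIord : ∀ k l : Fin K, k < l → ∀ x ∈ I k, ∀ y ∈ I l, x < y)
    (hIpos : ∀ k, 0 < μ (f ⁻¹' I k))
    -- block means, filter means, and the lower bound
    (mA mB : Fin K → ℝ)
    (hmA : ∀ k, mA k = (∑ j ∈ A, condMeanEvent μ (X j) (f ⁻¹' I k)) / (A.card : ℝ))
    (hmB : ∀ k, mB k = (∑ j ∈ B, condMeanEvent μ (X j) (f ⁻¹' I k)) / (B.card : ℝ))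
    (ubarA ubarB : ℝ)
    (hubarA : ubarA = (∑ j ∈ A, u₁ j) / (A.card : ℝ))
    (hubarB : ubarB = (∑ j ∈ B, u₁ j) / (B.card : ℝ))
    (hload : 0 < max |ubarA| |ubarB|)
    (bound : ℝ)
    (hbound : bound = max |ubarA| |ubarB| *
      |condMeanEvent μ f (f ⁻¹' I ⟨K - 1, by omega⟩) -
        condMeanEvent μ f (f ⁻¹' I ⟨0, by omega⟩)|) :
    0 < bound ∧
      ∃ k l : Fin K, k < l ∧ bound ≤ max |mA k - mA l| |mB k - mB l| := by
  have hSymm : S.IsSymm := isHermitian_iff_isSymm.1 hS.1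
  have hu : u₁ ⬝ᵥ u₁ = 1 := by simpa [dotProduct, sq] using hunit
  have hmap : μ.map f = gaussianReal 0 lam₁.toNNReal := by
    rw [hf, hGauss, Matrix.sum_mul_mul_eq_dotProduct_mulVec, heig, dotProduct_smul, hu,
      smul_eq_mul, mul_one]
  have hfGauss : HasGaussianLaw f μ := hasGaussianLaw_of_map_eq_gaussianReal hmap
  have hcond : ∀ j k, condMeanEvent μ (X j) (f ⁻¹' I k)
      = u₁ j * condMeanEvent μ f (f ⁻¹' I k) := by
    intro j k
    subst hf
    simpa [Pi.single_apply] using condMeanEvent_sum_mul_preimage_eq_dotProduct_mul hGauss hSymm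
      heig hu (Pi.single j 1) (hImeas k)
  have hblock : ∀ (C : Finset (Fin p)) k, (∑ j ∈ C, condMeanEvent μ (X j) (f ⁻¹' I k)) / C.card
      = (∑ j ∈ C, u₁ j) / C.card * condMeanEvent μ f (f ⁻¹' I k) := by
    intro C k
    rw [Finset.sum_congr rfl fun j _ => hcond j k, ← Finset.sum_mul, div_mul_eq_mul_div]
  have hlt : condMeanEvent μ f (f ⁻¹' I ⟨0, by omega⟩)
      < condMeanEvent μ f (f ⁻¹' I ⟨K - 1, by omega⟩) :=
    condMeanEvent_preimage_lt_of_forall_lt hfGauss.aemeasurable hfGauss.integrable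
      (measure_preimage_singleton_eq_zero_of_map_eq_gaussianReal hmap
        (by simpa using hlam₂.trans hgap))
      (hImeas _) (hImeas _) (hIord _ _ (Fin.mk_lt_mk.2 (by omega))) (hIpos _).ne' (hIpos _).ne'
  refine ⟨hbound ▸ mul_pos hload (abs_pos.2 (sub_ne_zero.2 hlt.ne')),
    ⟨0, by omega⟩, ⟨K - 1, by omega⟩, Fin.mk_lt_mk.2 (by omega), ?_⟩
  rw [hmA, hmA, hmB, hmB, hblock, hblock, hblock, hblock, ← hubarA, ← hubarB, hbound, ← mul_sub,
    ← mul_sub, abs_mul, abs_mul, abs_sub_comm, max_mul_of_nonneg _ _ (abs_nonneg _)]
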